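/- arXiv:1207.2819 — 2 statements merged into one kernel-verified Lean document; each statement's English description precedes it below -/
import Mathlib

section
/- Every language recognized by a pushdown automaton in normal form (each transition pops the top symbol and pushes at most one additional symbol) over an alphabet Σ with stack alphabet Γ and state set Q satisfies the pumping property with pumping constant p = |Q|·(|Γ|+1)^{|Q|²·|Γ|}: every accepted word w with |w| > p factors as w = uvxyz with |vxy| ≤ p, |vy| ≥ 1, and u v^n x y^n z accepted for all n ≥ 0. -/
/-- A pushdown automaton with state type `Q`, input alphabet `A`, stack alphabet `Γ`.
A transition pops the topmost stack symbol and pushes a string of stack symbols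
(head = new top). -/
structure PDA (Q A Γ : Type) where
  init : Q
  startSym : Γ
  final : Set Q
  trans : Q → Option A → Γ → Set (Q × List Γ)

namespace PDA

variable {Q A Γ : Type}

/-- One step of the automaton: pop the top symbol `Z` and push the string `β`. -/
def Step (M : PDA Q A Γ) (c : Q × List Γ) (a : Option A) (c' : Q × List Γ) : Prop :=
  ∃ Z rest β, c.2 = Z :: rest ∧ (c'.1, β) ∈ M.trans c.1 a Z ∧ c'.2 = β ++ rest

/-- A run of length `m`: a sequence of configurations connected by steps. -/
structure Run (M : PDA Q A Γ) (m : ℕ) where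
  conf : ℕ → Q × List Γ
  label : ℕ → Option A
  ok : ∀ t < m, M.Step (conf t) (label t) (conf (t + 1))

/-- Stack size at time `t`. -/
def Run.s {M : PDA Q A Γ} {m : ℕ} (r : M.Run m) (t : ℕ) : ℕ := (r.conf t).2.length

/-- The input word read between steps `a` (inclusive) and `b` (exclusive). -/
def Run.read {M : PDA Q A Γ} {m : ℕ} (r : M.Run m) (a b : ℕ) : List A :=
  ((List.range' a (b - a)).map r.label).reduceOption

/-- The run is an accepting run for the word `w`. -/
def Run.Accepting {M : PDA Q A Γ} {m : ℕ} (r : M.Run m) (w : List A) : Prop :=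
  r.conf 0 = (M.init, [M.startSym]) ∧ (r.conf m).1 ∈ M.final ∧ r.read 0 m = w

/-- The automaton accepts `w` iff some run accepts it. -/
def Accepts (M : PDA Q A Γ) (w : List A) : Prop := ∃ m, ∃ r : M.Run m, r.Accepting w

/-- Normal form: every transition pops the top symbol and pushes either nothing or
the popped symbol together with exactly one additional symbol. -/
def NormalForm (M : PDA Q A Γ) : Prop :=
  ∀ q a Z q' β, (q', β) ∈ M.trans q a Z → β = [] ∨ ∃ Y, β = [Y, Z]

/-- `(i, j, k)` is an `N`-level of the run `r`. -/
def Run.IsLevel {M : PDA Q A Γ} {m : ℕ} (r : M.Run m) (N i j k : ℕ) : Prop :=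
  i < j ∧ j < k ∧ k ≤ m ∧ r.s i = r.s k ∧ r.s j = r.s i + N ∧
    (∀ n, i ≤ n → n ≤ j → r.s i ≤ r.s n ∧ r.s n ≤ r.s j) ∧
    (∀ n, j ≤ n → n ≤ k → r.s k ≤ r.s n ∧ r.s n ≤ r.s j)

/-- The run has an `N`-level. -/
def Run.HasLevel {M : PDA Q A Γ} {m : ℕ} (r : M.Run m) (N : ℕ) : Prop :=
  ∃ i j k, r.IsLevel N i j k

/-- The level of the run is `l`: the maximal `N` such that the run has an `N`-level. -/
def Run.LevelIs {M : PDA Q A Γ} {m : ℕ} (r : M.Run m) (l : ℕ) : Prop :=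
  r.HasLevel l ∧ ∀ N, r.HasLevel N → N ≤ l

/-- `lp(h)`: the last time `≤ j` at which the stack has size `h`. -/
noncomputable def Run.lp {M : PDA Q A Γ} {m : ℕ} (r : M.Run m) (j h : ℕ) : ℕ :=
  sSup {y | y ≤ j ∧ r.s y = h}

/-- `fp(h)`: the first time `≥ j` at which the stack has size `h`. -/
noncomputable def Run.fp {M : PDA Q A Γ} {m : ℕ} (r : M.Run m) (j h : ℕ) : ℕ :=
  sInf {y | j ≤ y ∧ r.s y = h}

/-- The full state of a stack size `h` (relative to the middle index `j` of a level):
the state at `lp(h)`, the top stack symbol at `lp(h)`, and the state at `fp(h)`. -/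
noncomputable def Run.fullState {M : PDA Q A Γ} {m : ℕ} (r : M.Run m) (j h : ℕ) : Q × Option Γ × Q :=
  ((r.conf (r.lp j h)).1, (r.conf (r.lp j h)).2.head?, (r.conf (r.fp j h)).1)

/-- Extended configuration: the state together with the top `l` stack symbols,
padded with blanks (`none`) if the stack has fewer than `l` symbols. -/
def Run.extConf {M : PDA Q A Γ} {m : ℕ} (r : M.Run m) (l t : ℕ) : Q × List (Option Γ) :=
  ((r.conf t).1, ((r.conf t).2.map some ++ List.replicate l none).take l)

end PDA

/-- `n`-fold concatenation of a word. -/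
def wpow {A : Type} (v : List A) (n : ℕ) : List A := (List.replicate n v).flatten

/-!
Fix a shortest accepting run and put `N = |Q|² · |Γ|`, `p = |Q| · (|Γ| + 1) ^ N`. In normal form
the stack height changes by exactly one per step, and the symbol at height `h` is left in place
as long as the height does not drop below `h`.

If the run has an `N`-level `(i, j, k)`, two of the `N + 1` heights `h₁ < h₂` between its base
and its peak have the same full state. The climb from `h₁` to `h₂` and the matching descent from
`h₂` back to `h₁` can then be repeated any number of times around the middle part: this is the
pocket `v x y`. Minimality of the run makes `v y` nonempty. If the level reads more than `p`
letters, then instead two of its reading steps have the same state and the same (at most `N`)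
symbols above the base of the level, hence the same configuration, and the loop between them
pumps.

Without an `N`-level, the stack at any time `t` has at most `N` symbols above the part that is
never popped again. Two reading steps with the same state and the same such top give a
one-sided pump: the loop between them only pushes symbols that stay untouched afterwards.
-/

@[simp]
theorem wpow_zero {A : Type} (v : List A) : wpow v 0 = [] := rfl

theorem wpow_succ {A : Type} (v : List A) (n : ℕ) : wpow v (n + 1) = v ++ wpow v n := by
  simp [wpow, List.replicate_succ]

theorem wpow_succ' {A : Type} (v : List A) (n : ℕ) : wpow v (n + 1) = wpow v n ++ v := by
  simp [wpow, List.replicate_succ']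

@[simp]
theorem wpow_nil {A : Type} (n : ℕ) : wpow ([] : List A) n = [] := by
  simp [wpow]

theorem List.rdrop_append_rtake {α : Type} (l : List α) (n : ℕ) : l.rdrop n ++ l.rtake n = l :=
  List.take_append_drop _ _

theorem List.rdrop_length_sub_one {α : Type} (l : List α) : l.rdrop (l.length - 1) = l.take 1 := by
  rcases l with _ | ⟨x, l⟩ <;> simp [List.rdrop]

theorem List.take_one_rdrop {α : Type} {l : List α} {k : ℕ} (h : k < l.length) :
    (l.rdrop k).take 1 = l.take 1 := by
  rw [List.rdrop, List.take_take]
  congr 1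
  omega

theorem List.rtake_cons_of_le_length {α : Type} {l : List α} {n : ℕ} (x : α)
    (h : n ≤ l.length) : (x :: l).rtake n = l.rtake n := by
  simp only [List.rtake, List.length_cons, Nat.sub_add_comm h, List.drop_succ_cons]

theorem List.eq_of_getElem?_eq_of_length_le {α : Type} {l₁ l₂ : List α} {N : ℕ}
    (h₁ : l₁.length ≤ N) (h₂ : l₂.length ≤ N) (h : ∀ i : Fin N, l₁[i]? = l₂[i]?) : l₁ = l₂ :=
  List.ext_getElem? fun i => if hi : i < N then h ⟨i, hi⟩ else by
    rw [List.getElem?_eq_none (by omega), List.getElem?_eq_none (by omega)]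

theorem Nat.exists_eq_of_forall_succ_le_add_one {f : ℕ → ℕ} {a b n : ℕ} (hab : a ≤ b)
    (hf : ∀ t, a ≤ t → t < b → f (t + 1) ≤ f t + 1) (ha : f a ≤ n) (hb : n ≤ f b) :
    ∃ t, a ≤ t ∧ t ≤ b ∧ f t = n := by
  induction b, hab using Nat.le_induction with
  | base => exact ⟨a, le_rfl, le_rfl, by omega⟩
  | succ b hab ih =>
    by_cases hn : n ≤ f b
    · obtain ⟨t, h₁, h₂, h₃⟩ := ih (fun t h₁ h₂ => hf t h₁ (by omega)) hn
      exact ⟨t, h₁, by omega, h₃⟩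
    · exact ⟨b + 1, by omega, le_rfl, by have := hf b hab (by omega); omega⟩

theorem Nat.exists_eq_of_forall_le_succ_add_one {f : ℕ → ℕ} {a b n : ℕ} (hab : a ≤ b)
    (hf : ∀ t, a ≤ t → t < b → f t ≤ f (t + 1) + 1) (ha : n ≤ f a) (hb : f b ≤ n) :
    ∃ t, a ≤ t ∧ t ≤ b ∧ f t = n := by
  induction b, hab using Nat.le_induction with
  | base => exact ⟨a, le_rfl, le_rfl, by omega⟩
  | succ b hab ih =>
    by_cases hn : f b ≤ n
    · obtain ⟨t, h₁, h₂, h₃⟩ := ih (fun t h₁ h₂ => hf t h₁ (by omega)) hn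
      exact ⟨t, h₁, by omega, h₃⟩
    · exact ⟨b + 1, by omega, le_rfl, by have := hf b hab (by omega); omega⟩

namespace PDA

variable {Q A Γ : Type} {M : PDA Q A Γ}

def Pumpable (M : PDA Q A Γ) (p : ℕ) (w : List A) : Prop :=
  ∃ u v x y z : List A, w = u ++ v ++ x ++ y ++ z ∧ (v ++ x ++ y).length ≤ p ∧
    1 ≤ (v ++ y).length ∧ ∀ n : ℕ, M.Accepts (u ++ wpow v n ++ x ++ wpow y n ++ z)

inductive Reaches (M : PDA Q A Γ) : ℕ → Q × List Γ → Q × List Γ → List A → Prop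
  | refl (c : Q × List Γ) : M.Reaches 0 c c []
  | tail {n : ℕ} {c c' c'' : Q × List Γ} {w : List A} {a : Option A} :
      M.Reaches n c c' w → M.Step c' a c'' → M.Reaches (n + 1) c c'' (w ++ a.toList)

theorem Reaches.trans {n₁ n₂ : ℕ} {c₁ c₂ c₃ : Q × List Γ} {w₁ w₂ : List A}
    (h₁ : M.Reaches n₁ c₁ c₂ w₁) (h₂ : M.Reaches n₂ c₂ c₃ w₂) :
    M.Reaches (n₁ + n₂) c₁ c₃ (w₁ ++ w₂) := by
  induction h₂ with
  | refl => simpa using h₁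
  | tail _ hs ih => simpa [← Nat.add_assoc] using (ih h₁).tail hs

theorem Reaches.iterate {g : ℕ → Q × List Γ} {l : ℕ} {v : List A}
    (h : ∀ k, M.Reaches l (g k) (g (k + 1)) v) (n : ℕ) :
    M.Reaches (n * l) (g 0) (g n) (wpow v n) := by
  induction n with
  | zero => simpa using Reaches.refl (g 0)
  | succ n ih => simpa [Nat.succ_mul, wpow_succ'] using ih.trans (h n)

theorem Reaches.iterate_rev {g : ℕ → Q × List Γ} {l : ℕ} {v : List A}
    (h : ∀ k, M.Reaches l (g (k + 1)) (g k) v) (n : ℕ) :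
    M.Reaches (n * l) (g n) (g 0) (wpow v n) := by
  induction n with
  | zero => simpa using Reaches.refl (g 0)
  | succ n ih => simpa [Nat.succ_mul, Nat.add_comm, wpow_succ] using (h n).trans ih

theorem Reaches.pump_stair {c₀ : Q × List Γ} {f : List Γ → Q × List Γ} {q : Q}
    {T β σ : List Γ} {lu lv lz : ℕ} {u v z : List A}
    (hu : M.Reaches lu c₀ (q, T ++ σ) u) (hv : ∀ ρ, M.Reaches lv (q, T ++ ρ) (q, T ++ (β ++ ρ)) v)
    (hz : ∀ ρ, M.Reaches lz (q, T ++ ρ) (f ρ) z) (n : ℕ) :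
    M.Reaches (lu + n * lv + lz) c₀ (f (wpow β n ++ σ)) (u ++ wpow v n ++ z) := by
  have hvn : M.Reaches (n * lv) (q, T ++ σ) (q, T ++ (wpow β n ++ σ)) (wpow v n) := by
    simpa using Reaches.iterate (g := fun n => (q, T ++ (wpow β n ++ σ)))
      (fun n => by simpa [wpow_succ] using hv (wpow β n ++ σ)) n
  exact (hu.trans hvn).trans (hz _)

theorem Reaches.pump_pocket {c₀ c : Q × List Γ} {q q' : Q} {T β σ : List Γ}
    {lu lv lx ly lz : ℕ} {u v x y z : List A} (hu : M.Reaches lu c₀ (q, T ++ σ) u)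
    (hv : ∀ ρ, M.Reaches lv (q, T ++ ρ) (q, T ++ (β ++ ρ)) v)
    (hx : ∀ ρ, M.Reaches lx (q, T ++ ρ) (q', T ++ ρ) x)
    (hy : ∀ ρ, M.Reaches ly (q', T ++ (β ++ ρ)) (q', T ++ ρ) y)
    (hz : M.Reaches lz (q', T ++ σ) c z) (n : ℕ) :
    M.Reaches (lu + (n * lv + lx + n * ly) + lz) c₀ c (u ++ wpow v n ++ x ++ wpow y n ++ z) := by
  have hvn : M.Reaches (n * lv) (q, T ++ σ) (q, T ++ (wpow β n ++ σ)) (wpow v n) := by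
    simpa using Reaches.iterate (g := fun n => (q, T ++ (wpow β n ++ σ)))
      (fun n => by simpa [wpow_succ] using hv (wpow β n ++ σ)) n
  have hyn : M.Reaches (n * ly) (q', T ++ (wpow β n ++ σ)) (q', T ++ σ) (wpow y n) := by
    simpa using Reaches.iterate_rev (g := fun n => (q', T ++ (wpow β n ++ σ)))
      (fun n => by simpa [wpow_succ] using hy (wpow β n ++ σ)) n
  simpa using (hu.trans ((hvn.trans (hx _)).trans hyn)).trans hz

-- Stacks are lists with the top at the head: `l.rdrop k` is the part above height `k` and
-- `l.rtake k` consists of the bottom `k` symbols.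
theorem Step.rdrop_append {c c' : Q × List Γ} {a : Option A} (hs : M.Step c a c') {k : ℕ}
    (hk : k < c.2.length) (ρ : List Γ) :
    M.Step (c.1, c.2.rdrop k ++ ρ) a (c'.1, c'.2.rdrop k ++ ρ) := by
  obtain ⟨Z, rest, β, hc, htr, hc'⟩ := hs
  have hk' : k ≤ rest.length := by simp [hc] at hk; omega
  refine ⟨Z, rest.rdrop k ++ ρ, β, ?_, htr, ?_⟩
  · rw [hc, ← List.singleton_append, List.rdrop_append_of_le_length k hk']
    rfl
  · rw [hc', List.rdrop_append_of_le_length k hk', List.append_assoc]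

theorem Step.length_eq (hnf : M.NormalForm) {c c' : Q × List Γ} {a : Option A}
    (hs : M.Step c a c') : c'.2.length + 1 = c.2.length ∨ c'.2.length = c.2.length + 1 := by
  obtain ⟨Z, rest, β, hc, htr, hc'⟩ := hs
  rcases hnf _ _ _ _ _ htr with rfl | ⟨Y, rfl⟩ <;> simp [hc, hc']

theorem Step.rtake_eq (hnf : M.NormalForm) {c c' : Q × List Γ} {a : Option A}
    (hs : M.Step c a c') {h : ℕ} (h₁ : h ≤ c.2.length) (h₂ : h ≤ c'.2.length) :
    c'.2.rtake h = c.2.rtake h := by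
  obtain ⟨Z, rest, β, hc, htr, hc'⟩ := hs
  rw [hc, hc']
  rcases hnf _ _ _ _ _ htr with rfl | ⟨Y, rfl⟩
  · rw [hc'] at h₂
    exact (List.rtake_cons_of_le_length Z h₂).symm
  · rw [hc] at h₁
    exact List.rtake_cons_of_le_length Y h₁

namespace Run

variable {m : ℕ} (r : M.Run m)

theorem read_self (a : ℕ) : r.read a a = [] := by
  simp [Run.read]

theorem read_succ {a b : ℕ} (hab : a ≤ b) :
    r.read a (b + 1) = r.read a b ++ (r.label b).toList := by
  rw [Run.read, Run.read, show b + 1 - a = b - a + 1 by omega, List.range'_concat,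
    List.map_append, List.reduceOption_append]
  simp [show a + (b - a) = b by omega, List.reduceOption_singleton]

theorem read_append {a b c : ℕ} (hab : a ≤ b) (hbc : b ≤ c) :
    r.read a b ++ r.read b c = r.read a c := by
  induction c, hbc using Nat.le_induction with
  | base => simp [read_self]
  | succ c hbc ih => rw [read_succ r hbc, read_succ r (hab.trans hbc), ← ih, List.append_assoc]

theorem length_read_succ_le (a t : ℕ) :
    (r.read a (t + 1)).length ≤ (r.read a t).length + 1 := by
  rcases le_or_gt a t with h | h
  · rw [read_succ r h, List.length_append]
    cases r.label t <;> simp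
  · simp [Run.read, show t + 1 - a = 0 by omega]

theorem read_congr {m' : ℕ} {r' : M.Run m'} {a b : ℕ}
    (h : ∀ t, a ≤ t → t < b → r.label t = r'.label t) : r.read a b = r'.read a b := by
  unfold Run.read
  congr 1
  refine List.map_congr_left fun t ht => ?_
  rw [List.mem_range'_1] at ht
  exact h t ht.1 (by omega)

def readTimes (a b : ℕ) : Finset ℕ := (Finset.Ico a b).filter fun t => (r.label t).isSome

theorem length_read_eq_card_readTimes (a b : ℕ) :
    (r.read a b).length = (r.readTimes a b).card := by
  simp [Run.read, readTimes, Finset.card_def, Finset.filter_val, Nat.Ico_eq_range',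
    List.reduceOption_length_eq, List.filter_map, Function.comp_def]

theorem exists_map_eq_of_card_lt_length_read {F : Type} [Fintype F] (φ : ℕ → F) {a b : ℕ}
    (hab : a ≤ b) (h : Fintype.card F < (r.read a b).length) :
    ∃ τ τ', a ≤ τ ∧ τ < τ' ∧ τ' < b ∧ φ τ = φ τ' ∧
      0 < (r.read τ τ').length ∧ (r.read τ τ').length ≤ Fintype.card F := by
  obtain ⟨b', -, hb'b, hb'⟩ := Nat.exists_eq_of_forall_succ_le_add_one
    (f := fun t => (r.read a t).length) (n := Fintype.card F + 1) hab
    (fun t _ _ => r.length_read_succ_le a t) (by simp [read_self]) h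
  rw [length_read_eq_card_readTimes] at hb'
  obtain ⟨τ₁, h₁, τ₂, h₂, hne, heq⟩ := Finset.exists_ne_map_eq_of_card_lt_of_maps_to
    (s := r.readTimes a b') (t := Finset.univ) (by rw [hb', Finset.card_univ]; omega) (f := φ)
    fun _ _ => Finset.mem_coe.2 (Finset.mem_univ _)
  wlog hlt : τ₁ < τ₂ generalizing τ₁ τ₂
  · exact this τ₂ h₂ τ₁ h₁ hne.symm heq.symm (by omega)
  simp only [readTimes, Finset.mem_filter, Finset.mem_Ico] at h₁ h₂
  refine ⟨τ₁, τ₂, h₁.1.1, hlt, by omega, heq, ?_, ?_⟩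
  · rw [length_read_eq_card_readTimes, Finset.card_pos]
    exact ⟨τ₁, by simp [readTimes, hlt, h₁.2]⟩
  · have hsub : r.readTimes τ₁ τ₂ ⊆ (r.readTimes a b').erase τ₂ := by
      intro t ht
      simp only [readTimes, Finset.mem_filter, Finset.mem_Ico, Finset.mem_erase] at ht ⊢
      exact ⟨by omega, ⟨by omega, by omega⟩, ht.2⟩
    have := Finset.card_le_card hsub
    rw [Finset.card_erase_of_mem (by simp [readTimes, h₂.1, h₂.2]), hb'] at this
    rw [length_read_eq_card_readTimes]
    omega

theorem exists_rdrop_eq [Fintype Q] [Fintype Γ] (N : ℕ) (k : ℕ → ℕ) {a b : ℕ} (hab : a ≤ b)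
    (hk : ∀ t, a ≤ t → t < b → r.s t ≤ k t + N)
    (h : Fintype.card Q * (Fintype.card Γ + 1) ^ N < (r.read a b).length) :
    ∃ τ τ', a ≤ τ ∧ τ < τ' ∧ τ' < b ∧ (r.conf τ).1 = (r.conf τ').1 ∧
      (r.conf τ).2.rdrop (k τ) = (r.conf τ').2.rdrop (k τ') ∧ 0 < (r.read τ τ').length ∧
      (r.read τ τ').length ≤ Fintype.card Q * (Fintype.card Γ + 1) ^ N := by
  have hcard : Fintype.card (Q × (Fin N → Option Γ)) =
      Fintype.card Q * (Fintype.card Γ + 1) ^ N := by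
    simp
  obtain ⟨τ, τ', haτ, hττ', hτ'b, heq, hpos, hle⟩ := r.exists_map_eq_of_card_lt_length_read
    (fun t => ((r.conf t).1, fun i : Fin N => ((r.conf t).2.rdrop (k t))[i]?)) hab (hcard ▸ h)
  simp only [Prod.mk.injEq, funext_iff] at heq
  have hlen : ∀ t, a ≤ t → t < b → ((r.conf t).2.rdrop (k t)).length ≤ N := fun t h₁ h₂ => by
    have := hk t h₁ h₂
    simp only [List.rdrop, List.length_take, Run.s] at this ⊢
    omega
  exact ⟨τ, τ', haτ, hττ', hτ'b, heq.1, List.eq_of_getElem?_eq_of_length_le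
    (hlen τ haτ (by omega)) (hlen τ' (by omega) hτ'b) heq.2, hpos, hcard ▸ hle⟩

theorem s_pos {t : ℕ} (ht : t < m) : 0 < r.s t := by
  obtain ⟨Z, rest, β, hc, -, -⟩ := r.ok t ht
  simp [Run.s, hc]

theorem s_succ_le (hnf : M.NormalForm) {t : ℕ} (ht : t < m) : r.s (t + 1) ≤ r.s t + 1 := by
  have := (r.ok t ht).length_eq hnf
  simp only [Run.s]
  omega

theorem s_le_succ (hnf : M.NormalForm) {t : ℕ} (ht : t < m) : r.s t ≤ r.s (t + 1) + 1 := by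
  have := (r.ok t ht).length_eq hnf
  simp only [Run.s]
  omega

theorem reaches_rdrop_append {a b k : ℕ} (hab : a ≤ b) (hbm : b ≤ m)
    (hk : ∀ t, a ≤ t → t < b → k < r.s t) (ρ : List Γ) :
    M.Reaches (b - a) ((r.conf a).1, (r.conf a).2.rdrop k ++ ρ)
      ((r.conf b).1, (r.conf b).2.rdrop k ++ ρ) (r.read a b) := by
  induction b, hab using Nat.le_induction with
  | base => simpa [read_self] using Reaches.refl _
  | succ b hab ih =>
    rw [show b + 1 - a = b - a + 1 by omega, read_succ r hab]
    exact (ih (by omega) fun t h₁ h₂ => hk t h₁ (by omega)).tail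
      ((r.ok b (by omega)).rdrop_append (hk b hab (by omega)) ρ)

theorem reaches {a b : ℕ} (hab : a ≤ b) (hbm : b ≤ m) :
    M.Reaches (b - a) (r.conf a) (r.conf b) (r.read a b) := by
  simpa [List.rdrop_zero] using
    r.reaches_rdrop_append hab hbm (fun t _ ht => r.s_pos (by omega)) []

theorem rtake_eq (hnf : M.NormalForm) {a b h : ℕ} (hab : a ≤ b) (hbm : b ≤ m)
    (hh : ∀ t, a ≤ t → t ≤ b → h ≤ r.s t) : (r.conf b).2.rtake h = (r.conf a).2.rtake h := by
  induction b, hab using Nat.le_induction with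
  | base => rfl
  | succ b hab ih =>
    rw [← ih (by omega) fun t h₁ h₂ => hh t h₁ (by omega)]
    exact (r.ok b (by omega)).rtake_eq hnf (hh b hab (by omega)) (hh (b + 1) (by omega) le_rfl)

theorem stack_eq_of_s_eq (hnf : M.NormalForm) {a b : ℕ} (hab : a ≤ b) (hbm : b ≤ m)
    (hs : r.s b = r.s a) (hh : ∀ t, a ≤ t → t ≤ b → r.s a ≤ r.s t) :
    (r.conf b).2 = (r.conf a).2 := by
  have h := r.rtake_eq hnf hab hbm hh
  simp only [List.rtake, Run.s] at h hs
  rwa [hs, Nat.sub_self, List.drop_zero, List.drop_zero] at h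

end Run

theorem Reaches.exists_run {n : ℕ} {c c' : Q × List Γ} {w : List A} (h : M.Reaches n c c' w) :
    ∃ r : M.Run n, r.conf 0 = c ∧ r.conf n = c' ∧ r.read 0 n = w := by
  induction h with
  | refl c => exact ⟨⟨fun _ => c, fun _ => none, by simp⟩, rfl, rfl, Run.read_self _ 0⟩
  | @tail n c c' c'' w a _ hs ih =>
    obtain ⟨r, h₀, hn, hw⟩ := ih
    let r' : M.Run (n + 1) :=
      ⟨fun t => if t ≤ n then r.conf t else c'', fun t => if t < n then r.label t else a,
        fun t ht => by
          rcases Nat.lt_or_ge t n with htn | htn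
          · simpa [htn.le, htn, Nat.succ_le_of_lt htn] using r.ok t htn
          · obtain rfl : t = n := by omega
            simpa [hn] using hs⟩
    refine ⟨r', by simp [r', h₀], by simp [r'], ?_⟩
    rw [Run.read_succ r' (Nat.zero_le n), ← hw,
      Run.read_congr r' (r' := r) fun t _ ht => by simp [r', ht]]
    simp [r']

theorem accepts_of_reaches {n : ℕ} {c : Q × List Γ} {w : List A}
    (h : M.Reaches n (M.init, [M.startSym]) c w) (hc : c.1 ∈ M.final) : M.Accepts w := by
  obtain ⟨r, h₀, hn, hw⟩ := h.exists_run
  exact ⟨n, r, h₀, hn ▸ hc, hw⟩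

theorem Accepts.exists_run_min {w : List A} (h : M.Accepts w) :
    ∃ m, ∃ r : M.Run m, r.Accepting w ∧ ∀ n < m, ∀ r' : M.Run n, ¬ r'.Accepting w := by
  classical
  obtain ⟨r, hr⟩ := Nat.find_spec h
  exact ⟨Nat.find h, r, hr, fun n hn r' hr' => Nat.find_min h hn ⟨r', hr'⟩⟩

namespace Run

variable {m : ℕ} (r : M.Run m)

theorem lp_spec (hnf : M.NormalForm) {a j h : ℕ} (haj : a ≤ j) (hjm : j ≤ m) (ha : r.s a ≤ h)
    (hj : h ≤ r.s j) : a ≤ r.lp j h ∧ r.lp j h ≤ j ∧ r.s (r.lp j h) = h := by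
  obtain ⟨y, hay, hyj, hy⟩ := Nat.exists_eq_of_forall_succ_le_add_one (f := r.s) haj
    (fun t _ ht => r.s_succ_le hnf (by omega)) ha hj
  have hbdd : BddAbove {y | y ≤ j ∧ r.s y = h} := ⟨j, fun _ hy => hy.1⟩
  obtain ⟨hlpj, hlp⟩ := Nat.sSup_mem (s := {y | y ≤ j ∧ r.s y = h}) ⟨y, hyj, hy⟩ hbdd
  exact ⟨hay.trans (le_csSup hbdd ⟨hyj, hy⟩), hlpj, hlp⟩

theorem lt_s_of_lp_lt (hnf : M.NormalForm) {j h y : ℕ} (hjm : j ≤ m) (hj : h ≤ r.s j)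
    (hy : r.lp j h < y) (hyj : y ≤ j) : h < r.s y := by
  by_contra! hle
  obtain ⟨y', hyy', hy'j, hy'⟩ := Nat.exists_eq_of_forall_succ_le_add_one (f := r.s) hyj
    (fun t _ ht => r.s_succ_le hnf (by omega)) hle hj
  have : y' ≤ r.lp j h := le_csSup ⟨j, fun _ hy => hy.1⟩ ⟨hy'j, hy'⟩
  omega

theorem fp_spec (hnf : M.NormalForm) {b j h : ℕ} (hjb : j ≤ b) (hbm : b ≤ m) (hb : r.s b ≤ h)
    (hj : h ≤ r.s j) : j ≤ r.fp j h ∧ r.fp j h ≤ b ∧ r.s (r.fp j h) = h := by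
  obtain ⟨y, hjy, hyb, hy⟩ := Nat.exists_eq_of_forall_le_succ_add_one (f := r.s) hjb
    (fun t _ ht => r.s_le_succ hnf (by omega)) hj hb
  obtain ⟨hjfp, hfp⟩ := Nat.sInf_mem (s := {y | j ≤ y ∧ r.s y = h}) ⟨y, hjy, hy⟩
  exact ⟨hjfp, (Nat.sInf_le (s := {y | j ≤ y ∧ r.s y = h}) ⟨hjy, hy⟩).trans hyb, hfp⟩

theorem lt_s_of_lt_fp (hnf : M.NormalForm) {j h y : ℕ} (hym : y ≤ m) (hj : h ≤ r.s j)
    (hjy : j ≤ y) (hy : y < r.fp j h) : h < r.s y := by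
  by_contra! hle
  obtain ⟨y', hjy', hy'y, hy'⟩ := Nat.exists_eq_of_forall_le_succ_add_one (f := r.s) hjy
    (fun t _ ht => r.s_le_succ hnf (by omega)) hj hle
  have : r.fp j h ≤ y' := Nat.sInf_le ⟨hjy', hy'⟩
  omega

theorem hasLevel_of_add_le (hnf : M.NormalForm) (h₀ : r.s 0 = 1) {N t u : ℕ} (hN : 0 < N)
    (htu : t ≤ u) (hum : u < m) (hexc : r.s u + N ≤ r.s t) : r.HasLevel N := by
  obtain ⟨j, hj, hmax⟩ := (Finset.range (u + 1)).exists_max_image r.s ⟨0, by simp⟩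
  have hju : j ≤ u := Nat.lt_succ_iff.1 (Finset.mem_range.1 hj)
  have hmax' : ∀ y, y ≤ u → r.s y ≤ r.s j := fun y hy => hmax y (by simp; omega)
  have hsj : r.s u + N ≤ r.s j := hexc.trans (hmax' t htu)
  have hsu := r.s_pos hum
  obtain ⟨-, hij, hsi⟩ :=
    r.lp_spec hnf (Nat.zero_le j) (by omega) (h := r.s j - N) (by omega) (by omega)
  obtain ⟨hjk, hku, hsk⟩ := r.fp_spec hnf hju hum.le (h := r.s j - N) (by omega) (by omega)
  have hij' : r.lp j (r.s j - N) < j := lt_of_le_of_ne hij fun h => by rw [h] at hsi; omega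
  have hjk' : j < r.fp j (r.s j - N) := lt_of_le_of_ne hjk fun h => by rw [← h] at hsk; omega
  refine ⟨_, j, _, hij', hjk', by omega, by omega, by omega,
    fun n h₁ h₂ => ⟨?_, hmax' n (by omega)⟩, fun n h₁ h₂ => ⟨?_, hmax' n (by omega)⟩⟩
  · rcases h₁.eq_or_lt with h₁ | h₁
    · rw [h₁]
    · rw [hsi]
      exact (r.lt_s_of_lp_lt hnf (by omega) (by omega) h₁ h₂).le
  · rcases h₂.eq_or_lt with h₂ | h₂
    · rw [h₂]
    · rw [hsk]
      exact (r.lt_s_of_lt_fp hnf (by omega) (by omega) h₁ h₂).le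

noncomputable def futureMin (t : ℕ) : ℕ := sInf (r.s '' Set.Ico t m)

theorem futureMin_le {t u : ℕ} (htu : t ≤ u) (hum : u < m) : r.futureMin t ≤ r.s u :=
  Nat.sInf_le ⟨u, ⟨htu, hum⟩, rfl⟩

theorem exists_s_eq_futureMin {t : ℕ} (ht : t < m) :
    ∃ u, t ≤ u ∧ u < m ∧ r.s u = r.futureMin t := by
  obtain ⟨u, ⟨h₁, h₂⟩, hu⟩ :=
    Nat.sInf_mem (s := r.s '' Set.Ico t m) ⟨r.s t, t, ⟨le_rfl, ht⟩, rfl⟩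
  exact ⟨u, h₁, h₂, hu⟩

variable {r} {w : List A}

theorem Accepting.s_zero (hacc : r.Accepting w) : r.s 0 = 1 := by
  simp [Run.s, hacc.1]

theorem Accepting.pumpable_of_rdrop_eq (hacc : r.Accepting w) {τ τ' k k' p : ℕ}
    (hττ' : τ < τ') (hτ'm : τ' < m) (hkk' : k ≤ k')
    (hk : ∀ t, τ ≤ t → t < m → k < r.s t) (hk' : ∀ t, τ' ≤ t → t < m → k' < r.s t)
    (hq : (r.conf τ).1 = (r.conf τ').1) (htop : (r.conf τ).2.rdrop k = (r.conf τ').2.rdrop k')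
    (hpos : 0 < (r.read τ τ').length) (hle : (r.read τ τ').length ≤ p) : M.Pumpable p w := by
  set q := (r.conf τ).1
  set T := (r.conf τ).2.rdrop k
  set σ := (r.conf τ).2.rtake k
  set β := ((r.conf τ').2.rdrop k).rtake (k' - k)
  have hsplit : (r.conf τ').2.rdrop k = T ++ β := by
    rw [htop, ← Nat.add_sub_cancel' hkk', ← List.rdrop_add, List.rdrop_append_rtake]
  have hu : M.Reaches τ (M.init, [M.startSym]) (q, T ++ σ) (r.read 0 τ) := by
    rw [show (q, T ++ σ) = r.conf τ from Prod.ext rfl (List.rdrop_append_rtake _ _), ← hacc.1]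
    simpa using r.reaches (Nat.zero_le τ) (by omega)
  have hv : ∀ ρ, M.Reaches (τ' - τ) (q, T ++ ρ) (q, T ++ (β ++ ρ)) (r.read τ τ') := fun ρ => by
    have := r.reaches_rdrop_append hττ'.le hτ'm.le (fun t h₁ h₂ => hk t h₁ (by omega)) ρ
    rwa [hsplit, ← hq, List.append_assoc] at this
  have hz : ∀ ρ, M.Reaches (m - τ') (q, T ++ ρ) ((r.conf m).1, (r.conf m).2.rdrop k' ++ ρ)
      (r.read τ' m) := fun ρ => by
    have := r.reaches_rdrop_append hτ'm.le le_rfl hk' ρ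
    rwa [← htop, ← hq] at this
  refine ⟨r.read 0 τ, r.read τ τ', [], [], r.read τ' m, ?_, by simpa using hle,
    by rw [List.append_nil]; exact hpos, fun n => ?_⟩
  · rw [← hacc.2.2, ← r.read_append (Nat.zero_le τ') hτ'm.le,
      ← r.read_append (Nat.zero_le τ) hττ'.le]
    simp
  · simpa using accepts_of_reaches (Reaches.pump_stair hu hv hz n) hacc.2.1

theorem Accepting.pumpable_of_not_hasLevel [Fintype Q] [Fintype Γ] (hnf : M.NormalForm)
    (hacc : r.Accepting w) {N : ℕ} (hN : 0 < N) (hlev : ¬ r.HasLevel N)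
    (hw : Fintype.card Q * (Fintype.card Γ + 1) ^ N < w.length) :
    M.Pumpable (Fintype.card Q * (Fintype.card Γ + 1) ^ N) w := by
  have hexc : ∀ t u, t ≤ u → u < m → r.s t < r.s u + N := fun t u htu hum => by
    by_contra! h
    exact hlev (r.hasLevel_of_add_le hnf hacc.s_zero hN htu hum h)
  -- The bottom `futureMin t - 1` symbols of the stack at time `t` are never popped again.
  have hk : ∀ t u, t ≤ u → u < m → r.futureMin t - 1 < r.s u := fun t u htu hum => by
    obtain ⟨v, -, hv, hvt⟩ := r.exists_s_eq_futureMin (htu.trans_lt hum)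
    have := r.s_pos hv
    have := r.futureMin_le htu hum
    omega
  obtain ⟨τ, τ', -, hττ', hτ'm, hq, htop, hpos, hle⟩ := r.exists_rdrop_eq N
    (fun t => r.futureMin t - 1) (Nat.zero_le m) (fun t _ ht => by
      obtain ⟨u, htu, hum, hu⟩ := r.exists_s_eq_futureMin ht
      have := hexc t u htu hum
      have := r.s_pos hum
      omega) (by rw [hacc.2.2]; exact hw)
  have hmono : r.futureMin τ - 1 ≤ r.futureMin τ' - 1 := by
    obtain ⟨u, htu, hum, hu⟩ := r.exists_s_eq_futureMin hτ'm
    have := r.futureMin_le (hττ'.le.trans htu) hum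
    omega
  exact hacc.pumpable_of_rdrop_eq hττ' hτ'm hmono (hk τ) (hk τ') hq htop hpos hle

variable {N i j k : ℕ}

theorem IsLevel.lp_spec (hnf : M.NormalForm) (hlev : r.IsLevel N i j k) {h : ℕ}
    (h₁ : r.s i ≤ h) (h₂ : h ≤ r.s j) : i ≤ r.lp j h ∧ r.lp j h ≤ j ∧ r.s (r.lp j h) = h :=
  r.lp_spec hnf hlev.1.le (hlev.2.1.trans_le hlev.2.2.1).le h₁ h₂

theorem IsLevel.fp_spec (hnf : M.NormalForm) (hlev : r.IsLevel N i j k) {h : ℕ}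
    (h₁ : r.s i ≤ h) (h₂ : h ≤ r.s j) : j ≤ r.fp j h ∧ r.fp j h ≤ k ∧ r.s (r.fp j h) = h :=
  r.fp_spec hnf hlev.2.1.le hlev.2.2.1 (hlev.2.2.2.1 ▸ h₁) h₂

theorem IsLevel.le_s (hnf : M.NormalForm) (hlev : r.IsLevel N i j k) {h t : ℕ}
    (h₁ : r.s i ≤ h) (h₂ : h ≤ r.s j) (ht₁ : r.lp j h ≤ t) (ht₂ : t ≤ r.fp j h) :
    h ≤ r.s t := by
  obtain ⟨-, hlpj, hslp⟩ := hlev.lp_spec hnf h₁ h₂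
  obtain ⟨hjfp, hfpk, hsfp⟩ := hlev.fp_spec hnf h₁ h₂
  have hkm := hlev.2.2.1
  rcases le_total t j with htj | hjt
  · rcases ht₁.eq_or_lt with rfl | hlt
    · exact hslp.ge
    · exact (r.lt_s_of_lp_lt hnf (by omega) h₂ hlt htj).le
  · rcases ht₂.eq_or_lt with rfl | hlt
    · exact hsfp.ge
    · exact (r.lt_s_of_lt_fp hnf (by omega) h₂ hjt hlt).le

theorem IsLevel.lp_lt_lp (hnf : M.NormalForm) (hlev : r.IsLevel N i j k) {h h' : ℕ}
    (h₁ : r.s i ≤ h) (hh' : h < h') (h₂ : h' ≤ r.s j) : r.lp j h < r.lp j h' := by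
  obtain ⟨-, hlpj, hslp⟩ := hlev.lp_spec hnf h₁ (hh'.le.trans h₂)
  obtain ⟨-, -, hslp'⟩ := hlev.lp_spec hnf (h₁.trans hh'.le) h₂
  by_contra! hle
  rcases hle.eq_or_lt with heq | hlt
  · rw [heq] at hslp'
    omega
  · have := r.lt_s_of_lp_lt hnf (hlev.2.1.trans_le hlev.2.2.1).le h₂ hlt hlpj
    omega

theorem IsLevel.fp_lt_fp (hnf : M.NormalForm) (hlev : r.IsLevel N i j k) {h h' : ℕ}
    (h₁ : r.s i ≤ h) (hh' : h < h') (h₂ : h' ≤ r.s j) : r.fp j h' < r.fp j h := by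
  obtain ⟨hjfp, hfpk, hsfp⟩ := hlev.fp_spec hnf h₁ (hh'.le.trans h₂)
  obtain ⟨-, -, hsfp'⟩ := hlev.fp_spec hnf (h₁.trans hh'.le) h₂
  by_contra! hle
  rcases hle.eq_or_lt with heq | hlt
  · rw [← heq] at hsfp'
    omega
  · have := r.lt_s_of_lt_fp hnf (hfpk.trans hlev.2.2.1) h₂ hjfp hlt
    omega

theorem IsLevel.exists_fullState_eq [Fintype Q] [Fintype Γ] (hnf : M.NormalForm)
    (hlev : r.IsLevel N i j k) (hN : Fintype.card Q ^ 2 * Fintype.card Γ ≤ N) :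
    ∃ h₁ h₂, r.s i ≤ h₁ ∧ h₁ < h₂ ∧ h₂ ≤ r.s j ∧ r.fullState j h₁ = r.fullState j h₂ := by
  classical
  set T := (Finset.univ : Finset (Q × Γ × Q)).image fun x => (x.1, some x.2.1, x.2.2)
  have hT : T.card < (Finset.Icc (r.s i) (r.s j)).card := by
    calc T.card ≤ Fintype.card (Q × Γ × Q) := Finset.card_image_le.trans (by simp)
      _ = Fintype.card Q ^ 2 * Fintype.card Γ := by simp only [Fintype.card_prod]; ring
      _ < (Finset.Icc (r.s i) (r.s j)).card := by
        have := hlev.2.2.2.2.1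
        simp only [Nat.card_Icc]
        omega
  have hmaps : ∀ h ∈ Finset.Icc (r.s i) (r.s j), r.fullState j h ∈ T := fun h hh => by
    rw [Finset.mem_Icc] at hh
    obtain ⟨-, -, hslp⟩ := hlev.lp_spec hnf hh.1 hh.2
    have hpos := r.s_pos (hlev.1.trans_le (hlev.2.1.le.trans hlev.2.2.1))
    cases hl : (r.conf (r.lp j h)).2 with
    | nil => simp [Run.s, hl] at hslp; omega
    | cons X l => exact Finset.mem_image.2 ⟨((r.conf (r.lp j h)).1, X, (r.conf (r.fp j h)).1),
        Finset.mem_univ _, by simp [Run.fullState, hl]⟩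
  obtain ⟨h₁, hh₁, h₂, hh₂, hne, heq⟩ :=
    Finset.exists_ne_map_eq_of_card_lt_of_maps_to hT fun h hh => Finset.mem_coe.2 (hmaps h hh)
  rw [Finset.mem_Icc] at hh₁ hh₂
  rcases lt_or_gt_of_ne hne with hlt | hlt
  · exact ⟨h₁, h₂, hh₁.1, hlt, hh₂.2, heq⟩
  · exact ⟨h₂, h₁, hh₂.1, hlt, hh₁.2, heq.symm⟩

theorem Accepting.pumpable_of_band [Fintype Q] [Fintype Γ] (hnf : M.NormalForm)
    (hacc : r.Accepting w) {a b L : ℕ} (hab : a ≤ b) (hbm : b ≤ m)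
    (hband : ∀ t, a ≤ t → t ≤ b → L ≤ r.s t ∧ r.s t ≤ L + N)
    (hlong : Fintype.card Q * (Fintype.card Γ + 1) ^ N < (r.read a b).length) :
    M.Pumpable (Fintype.card Q * (Fintype.card Γ + 1) ^ N) w := by
  obtain ⟨τ, τ', haτ, hττ', hτ'b, hq, htop, hpos, hle⟩ :=
    r.exists_rdrop_eq N (fun _ => L) hab (fun t h₁ h₂ => (hband t h₁ h₂.le).2) hlong
  have hbot : (r.conf τ').2.rtake L = (r.conf τ).2.rtake L :=
    r.rtake_eq hnf hττ'.le (by omega) fun t h₁ h₂ => (hband t (by omega) (by omega)).1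
  have hstack : (r.conf τ).2.rdrop 0 = (r.conf τ').2.rdrop 0 := by
    rw [List.rdrop_zero, List.rdrop_zero, ← List.rdrop_append_rtake (r.conf τ).2 L,
      ← List.rdrop_append_rtake (r.conf τ').2 L, htop, hbot]
  exact hacc.pumpable_of_rdrop_eq hττ' (by omega) le_rfl (fun t _ ht => r.s_pos ht)
    (fun t _ ht => r.s_pos ht) hq hstack hpos hle

theorem reaches_pocket (hnf : M.NormalForm) {a₁ a₂ b₂ b₁ : ℕ} (ha : a₁ < a₂) (hab : a₂ ≤ b₂)
    (hb : b₂ ≤ b₁) (hbm : b₁ ≤ m) (hs₁ : r.s b₁ = r.s a₁) (hs₂ : r.s b₂ = r.s a₂)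
    (hh₁ : ∀ t, a₁ ≤ t → t ≤ b₁ → r.s a₁ ≤ r.s t) (hh₂ : ∀ t, a₂ ≤ t → t ≤ b₂ → r.s a₂ ≤ r.s t)
    (hq : (r.conf a₁).1 = (r.conf a₂).1) (hq' : (r.conf b₂).1 = (r.conf b₁).1)
    (hX : (r.conf a₁).2.head? = (r.conf a₂).2.head?) (n : ℕ) :
    M.Reaches (a₁ + (n * (a₂ - a₁) + (b₂ - a₂) + n * (b₁ - b₂)) + (m - b₁)) (r.conf 0) (r.conf m)
      (r.read 0 a₁ ++ wpow (r.read a₁ a₂) n ++ r.read a₂ b₂ ++ wpow (r.read b₂ b₁) n ++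
        r.read b₁ m) := by
  have hpos := r.s_pos (show a₁ < m by omega)
  have hs₁₂ := hh₁ a₂ ha.le (by omega)
  have hstk₁ := r.stack_eq_of_s_eq hnf (ha.le.trans (hab.trans hb)) hbm hs₁ hh₁
  have hstk₂ := r.stack_eq_of_s_eq hnf hab (hb.trans hbm) hs₂ hh₂
  set q := (r.conf a₁).1
  set q' := (r.conf b₁).1
  set T := (r.conf a₁).2.rdrop (r.s a₁ - 1)
  set σ := (r.conf a₁).2.rtake (r.s a₁ - 1)
  set β := ((r.conf a₂).2.rdrop (r.s a₁ - 1)).drop 1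
  -- `T` is the one-symbol list holding the common top symbol of the stacks at `a₁` and `a₂`.
  have hT : T = (r.conf a₂).2.take 1 := by
    rw [List.take_one, ← hX, ← List.take_one]
    exact List.rdrop_length_sub_one _
  have hT₂ : (r.conf a₂).2.rdrop (r.s a₂ - 1) = T := by
    rw [hT]
    exact List.rdrop_length_sub_one _
  have hTβ : (r.conf a₂).2.rdrop (r.s a₁ - 1) = T ++ β := by
    rw [← List.take_append_drop 1 ((r.conf a₂).2.rdrop _), hT,
      List.take_one_rdrop (show r.s a₁ - 1 < r.s a₂ by omega)]
  have hu : M.Reaches a₁ (r.conf 0) (q, T ++ σ) (r.read 0 a₁) := by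
    rw [show (q, T ++ σ) = r.conf a₁ from Prod.ext rfl (List.rdrop_append_rtake _ _)]
    simpa using r.reaches (Nat.zero_le a₁) (by omega)
  have hv : ∀ ρ, M.Reaches (a₂ - a₁) (q, T ++ ρ) (q, T ++ (β ++ ρ)) (r.read a₁ a₂) := fun ρ => by
    have := r.reaches_rdrop_append ha.le (by omega) (k := r.s a₁ - 1)
      (fun t h₁ h₂ => by have := hh₁ t h₁ (by omega); omega) ρ
    rwa [hTβ, ← hq, List.append_assoc] at this
  have hx : ∀ ρ, M.Reaches (b₂ - a₂) (q, T ++ ρ) (q', T ++ ρ) (r.read a₂ b₂) := fun ρ => by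
    have := r.reaches_rdrop_append hab (by omega) (k := r.s a₂ - 1)
      (fun t h₁ h₂ => by have := hh₂ t h₁ (by omega); omega) ρ
    rwa [hstk₂, hT₂, ← hq, hq'] at this
  have hy : ∀ ρ, M.Reaches (b₁ - b₂) (q', T ++ (β ++ ρ)) (q', T ++ ρ) (r.read b₂ b₁) := fun ρ => by
    have := r.reaches_rdrop_append hb hbm (k := r.s a₁ - 1)
      (fun t h₁ h₂ => by have := hh₁ t (by omega) (by omega); omega) ρ
    rwa [hstk₂, hTβ, hstk₁, hq', List.append_assoc] at this
  have hz : M.Reaches (m - b₁) (q', T ++ σ) (r.conf m) (r.read b₁ m) := by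
    rw [show (q', T ++ σ) = r.conf b₁ from Prod.ext rfl (hstk₁ ▸ List.rdrop_append_rtake _ _)]
    exact r.reaches hbm le_rfl
  exact Reaches.pump_pocket hu hv hx hy hz n

theorem Accepting.pumpable_of_pocket (hnf : M.NormalForm) (hacc : r.Accepting w)
    (hmin : ∀ n < m, ∀ r' : M.Run n, ¬ r'.Accepting w) {a₁ a₂ b₂ b₁ p : ℕ} (ha : a₁ < a₂)
    (hab : a₂ ≤ b₂) (hb : b₂ ≤ b₁) (hbm : b₁ ≤ m) (hs₁ : r.s b₁ = r.s a₁)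
    (hs₂ : r.s b₂ = r.s a₂) (hh₁ : ∀ t, a₁ ≤ t → t ≤ b₁ → r.s a₁ ≤ r.s t)
    (hh₂ : ∀ t, a₂ ≤ t → t ≤ b₂ → r.s a₂ ≤ r.s t) (hq : (r.conf a₁).1 = (r.conf a₂).1)
    (hq' : (r.conf b₂).1 = (r.conf b₁).1) (hX : (r.conf a₁).2.head? = (r.conf a₂).2.head?)
    (hp : (r.read a₁ b₁).length ≤ p) : M.Pumpable p w := by
  have hR := r.reaches_pocket hnf ha hab hb hbm hs₁ hs₂ hh₁ hh₂ hq hq' hX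
  have hw : w = r.read 0 a₁ ++ r.read a₁ a₂ ++ r.read a₂ b₂ ++ r.read b₂ b₁ ++ r.read b₁ m := by
    rw [← hacc.2.2, ← r.read_append (Nat.zero_le a₁) (by omega : a₁ ≤ m),
      ← r.read_append ha.le (by omega : a₂ ≤ m), ← r.read_append hab (by omega : b₂ ≤ m),
      ← r.read_append hb hbm]
    simp only [List.append_assoc]
  have hvxy : r.read a₁ a₂ ++ r.read a₂ b₂ ++ r.read b₂ b₁ = r.read a₁ b₁ := by
    rw [r.read_append ha.le hab, r.read_append (ha.le.trans hab) hb]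
  refine ⟨_, _, _, _, _, hw, hvxy ▸ hp, ?_, fun n => accepts_of_reaches (hacc.1 ▸ hR n) hacc.2.1⟩
  -- Otherwise the run without the two pumped segments would be a shorter accepting run.
  by_contra! hvy
  simp only [List.length_append, Nat.lt_one_iff, Nat.add_eq_zero_iff,
    List.length_eq_zero_iff] at hvy
  obtain ⟨r', h₀, hm, hread⟩ := (hR 0).exists_run
  exact hmin _ (by omega) r' ⟨h₀.trans hacc.1, hm ▸ hacc.2.1, by rw [hread, hw, hvy.1, hvy.2]; simp⟩

theorem Accepting.pumpable_of_isLevel [Fintype Q] [Fintype Γ] (hnf : M.NormalForm)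
    (hacc : r.Accepting w) (hmin : ∀ n < m, ∀ r' : M.Run n, ¬ r'.Accepting w)
    (hN : Fintype.card Q ^ 2 * Fintype.card Γ ≤ N) (hlev : r.IsLevel N i j k) :
    M.Pumpable (Fintype.card Q * (Fintype.card Γ + 1) ^ N) w := by
  obtain ⟨hij, hjk, hkm, hsik, hsj, hI, hJ⟩ := id hlev
  by_cases hlong : Fintype.card Q * (Fintype.card Γ + 1) ^ N < (r.read i k).length
  · refine hacc.pumpable_of_band hnf (L := r.s i) (hij.trans hjk).le hkm (fun t h₁ h₂ => ?_) hlong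
    rcases le_total t j with htj | hjt
    · have := hI t h₁ htj
      omega
    · have := hJ t hjt h₂
      omega
  obtain ⟨h₁, h₂, hih₁, h₁₂, h₂j, hfs⟩ := hlev.exists_fullState_eq hnf hN
  simp only [Run.fullState, Prod.mk.injEq] at hfs
  obtain ⟨hia₁, ha₁j, hsa₁⟩ := hlev.lp_spec hnf hih₁ (by omega)
  obtain ⟨-, ha₂j, hsa₂⟩ := hlev.lp_spec hnf (by omega) h₂j
  obtain ⟨hjb₂, -, hsb₂⟩ := hlev.fp_spec hnf (by omega) h₂j
  obtain ⟨hjb₁, hb₁k, hsb₁⟩ := hlev.fp_spec hnf hih₁ (by omega)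
  have hb := hlev.fp_lt_fp hnf hih₁ h₁₂ h₂j
  refine hacc.pumpable_of_pocket hnf hmin (hlev.lp_lt_lp hnf hih₁ h₁₂ h₂j) (ha₂j.trans hjb₂) hb.le
    (hb₁k.trans hkm) (hsb₁.trans hsa₁.symm) (hsb₂.trans hsa₂.symm)
    (fun t ht₁ ht₂ => by rw [hsa₁]; exact hlev.le_s hnf hih₁ (by omega) ht₁ ht₂)
    (fun t ht₁ ht₂ => by rw [hsa₂]; exact hlev.le_s hnf (by omega) h₂j ht₁ ht₂)
    hfs.1 hfs.2.2.symm hfs.2.1 ?_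
  rw [← r.read_append hia₁ (by omega), ← r.read_append (by omega) hb₁k] at hlong
  simp only [List.length_append] at hlong
  omega

end Run

end PDA

/-- The pumping lemma for languages of pushdown automata in normal form, with
pumping constant `p = |Q| · (|Γ| + 1) ^ (|Q|² · |Γ|)`. -/
theorem pda_pumping_lemma {Q A Γ : Type} [Fintype Q] [Fintype Γ] {M : PDA Q A Γ}
    (hnf : M.NormalForm) :
    ∀ w : List A, M.Accepts w →
      Fintype.card Q * (Fintype.card Γ + 1) ^ (Fintype.card Q ^ 2 * Fintype.card Γ)
        < w.length →
      ∃ u v x y z : List A, w = u ++ v ++ x ++ y ++ z ∧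
        (v ++ x ++ y).length ≤
          Fintype.card Q * (Fintype.card Γ + 1) ^ (Fintype.card Q ^ 2 * Fintype.card Γ) ∧
        1 ≤ (v ++ y).length ∧
        ∀ n : ℕ, M.Accepts (u ++ wpow v n ++ x ++ wpow y n ++ z) := by
  intro w hacc hlen
  have hQ : 0 < Fintype.card Q := Fintype.card_pos_iff.2 ⟨M.init⟩
  have hΓ : 0 < Fintype.card Γ := Fintype.card_pos_iff.2 ⟨M.startSym⟩
  obtain ⟨m, r, hr, hmin⟩ := hacc.exists_run_min
  by_cases hlev : r.HasLevel (Fintype.card Q ^ 2 * Fintype.card Γ)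
  · obtain ⟨i, j, k, hijk⟩ := hlev
    exact hr.pumpable_of_isLevel hnf hmin le_rfl hijk
  · exact hr.pumpable_of_not_hasLevel hnf (by positivity) hlev hlen
end

section
/- Let A be a pushdown automaton in normal form, π a run, and (i,j,k) an N-level with stack sizes g < h having equal full states. While reading the infix x of the input between positions lp(h) and fp(h), the run never pops the stack below height h; hence the segment of the run on x depends only on the state and top stack symbol at lp(h), not on the deeper stack contents. -/
/-!
In normal form every step changes the stack height by exactly one, so the height satisfies a
discrete intermediate value theorem. If the height dropped below `h` somewhere in
`[lp(h), fp(h)]`, it would pass through `h` again between that point and `j`, contradicting the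
maximality of `lp(h)` or the minimality of `fp(h)`; the same extremality excludes height exactly
`h` strictly inside. A stack that never gets lower than it was at time `lp(h)` cannot have
popped anything below that level, so the stack at `lp(h)` stays a suffix throughout.
-/

theorem exists_eq_of_mem_uIcc_of_steps_le_one {f : ℕ → ℕ} {a b h : ℕ} (hab : a ≤ b)
    (hf : ∀ t ∈ Set.Ico a b, f (t + 1) ≤ f t + 1 ∧ f t ≤ f (t + 1) + 1)
    (hh : h ∈ Set.uIcc (f a) (f b)) : ∃ y ∈ Set.Icc a b, f y = h := by
  induction b, hab using Nat.le_induction with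
  | base => exact ⟨a, Set.left_mem_Icc.2 le_rfl, by simpa [eq_comm] using hh⟩
  | succ b hab ih =>
    by_cases hb : f (b + 1) = h
    · exact ⟨b + 1, ⟨by omega, le_rfl⟩, hb⟩
    have hstep := hf b ⟨hab, b.lt_succ_self⟩
    obtain ⟨y, ⟨hay, hyb⟩, hy⟩ := ih (fun t ht => hf t ⟨ht.1, ht.2.trans b.lt_succ_self⟩) (by
      rw [Set.mem_uIcc] at hh ⊢
      omega)
    exact ⟨y, ⟨hay, by omega⟩, hy⟩

namespace PDA

variable {Q A Γ : Type} {M : PDA Q A Γ} {m : ℕ}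

theorem NormalForm.pop_or_push (hnf : M.NormalForm) {c c' : Q × List Γ} {a : Option A}
    (hs : M.Step c a c') : (∃ Z, c.2 = Z :: c'.2) ∨ ∃ Y, c'.2 = Y :: c.2 := by
  obtain ⟨Z, rest, β, hc, hβ, hc'⟩ := hs
  rcases hnf _ _ _ _ _ hβ with rfl | ⟨Y, rfl⟩
  · exact .inl ⟨Z, by simp [hc, hc']⟩
  · exact .inr ⟨Y, by simp [hc, hc']⟩

namespace Run

variable (r : M.Run m) {j h : ℕ}

theorem exists_s_eq (hnf : M.NormalForm) {a b : ℕ} (hab : a ≤ b) (hbm : b ≤ m)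
    (hh : h ∈ Set.uIcc (r.s a) (r.s b)) : ∃ y ∈ Set.Icc a b, r.s y = h := by
  refine exists_eq_of_mem_uIcc_of_steps_le_one hab (fun t ht => ?_) hh
  rcases hnf.pop_or_push (r.ok t (ht.2.trans_le hbm)) with ⟨Z, hpop⟩ | ⟨Y, hpush⟩
  · simp only [s, hpop, List.length_cons]; omega
  · simp only [s, hpush, List.length_cons]; omega

theorem conf_suffix_of_s_le (hnf : M.NormalForm) {a b : ℕ} (hbm : b ≤ m)
    (hge : ∀ n, a ≤ n → n ≤ b → r.s a ≤ r.s n) :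
    ∀ n, a ≤ n → n ≤ b → (r.conf a).2 <:+ (r.conf n).2 := by
  intro n han hnb
  induction n, han using Nat.le_induction with
  | base => exact List.suffix_refl _
  | succ n han ih =>
    have hsuf := ih (by omega)
    rcases hnf.pop_or_push (r.ok n (by omega)) with ⟨Z, hpop⟩ | ⟨Y, hpush⟩
    · rw [hpop, List.suffix_cons_iff] at hsuf
      refine hsuf.resolve_left fun heq => ?_
      have hlen := hge (n + 1) (by omega) hnb
      simp only [s, heq, List.length_cons] at hlen
      omega
    · rw [hpush]
      exact hsuf.trans (List.suffix_cons _ _)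

theorem le_lp {y : ℕ} (hyj : y ≤ j) (hy : r.s y = h) : y ≤ r.lp j h :=
  le_csSup ⟨j, fun _ hz => hz.1⟩ ⟨hyj, hy⟩

theorem lp_mem (hlp : ∃ y ≤ j, r.s y = h) : r.lp j h ≤ j ∧ r.s (r.lp j h) = h :=
  Nat.sSup_mem hlp ⟨j, fun _ hz => hz.1⟩

theorem fp_le {y : ℕ} (hjy : j ≤ y) (hy : r.s y = h) : r.fp j h ≤ y :=
  Nat.sInf_le ⟨hjy, hy⟩

theorem fp_mem (hfp : ∃ y ≥ j, r.s y = h) : j ≤ r.fp j h ∧ r.s (r.fp j h) = h :=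
  Nat.sInf_mem hfp

section Between

variable (hnf : M.NormalForm) (hlp : ∃ y ≤ j, r.s y = h) (hfp : ∃ y ∈ Set.Icc j m, r.s y = h)
  (hhj : h ≤ r.s j)
include hnf hlp hfp hhj

theorem le_s_of_lp_le_of_le_fp : ∀ n, r.lp j h ≤ n → n ≤ r.fp j h → h ≤ r.s n := by
  obtain ⟨y₀, ⟨hjy₀, hy₀m⟩, hy₀⟩ := hfp
  obtain ⟨hlpj, hslp⟩ := r.lp_mem hlp
  obtain ⟨hjfp, hsfp⟩ := r.fp_mem ⟨y₀, hjy₀, hy₀⟩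
  have hfpm : r.fp j h ≤ m := (r.fp_le hjy₀ hy₀).trans hy₀m
  intro n hlpn hnfp
  by_contra! hlt
  rcases le_total n j with hnj | hjn
  · obtain ⟨y, ⟨hny, hyj⟩, hy⟩ :=
      r.exists_s_eq hnf hnj (by omega) (Set.mem_uIcc_of_le hlt.le hhj)
    have := r.le_lp hyj hy
    obtain rfl : n = r.lp j h := by omega
    omega
  · obtain ⟨y, ⟨hjy, hyn⟩, hy⟩ :=
      r.exists_s_eq hnf hjn (by omega) (Set.mem_uIcc_of_ge hlt.le hhj)
    have := r.fp_le hjy hy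
    obtain rfl : n = r.fp j h := by omega
    omega

theorem lt_s_of_lp_lt_of_lt_fp : ∀ n, r.lp j h < n → n < r.fp j h → h < r.s n := by
  intro n hlpn hnfp
  refine (r.le_s_of_lp_le_of_le_fp hnf hlp hfp hhj n hlpn.le hnfp.le).lt_of_ne fun heq => ?_
  rcases le_total n j with hnj | hjn
  · exact hlpn.not_ge (r.le_lp hnj heq.symm)
  · exact hnfp.not_ge (r.fp_le hjn heq.symm)

theorem conf_lp_suffix :
    ∀ n, r.lp j h ≤ n → n ≤ r.fp j h → (r.conf (r.lp j h)).2 <:+ (r.conf n).2 := by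
  obtain ⟨y₀, ⟨hjy₀, hy₀m⟩, hy₀⟩ := hfp
  refine r.conf_suffix_of_s_le hnf ((r.fp_le hjy₀ hy₀).trans hy₀m) fun n hlpn hnfp => ?_
  rw [(r.lp_mem hlp).2]
  exact r.le_s_of_lp_le_of_le_fp hnf hlp ⟨y₀, ⟨hjy₀, hy₀m⟩, hy₀⟩ hhj n hlpn hnfp

end Between

end Run

end PDA

theorem middle_segment_above_h_general {Q A Γ : Type} {M : PDA Q A Γ} {m : ℕ}
    (hnf : M.NormalForm) (r : M.Run m)
    {N i j k : ℕ} (hlev : r.IsLevel N i j k)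
    {g h : ℕ} (hgl : r.s i ≤ g) (hgh : g < h) (hhu : h ≤ r.s j) :
    (∀ n, r.lp j h ≤ n → n ≤ r.fp j h → h ≤ r.s n) ∧
    (∀ n, r.lp j h < n → n < r.fp j h → h < r.s n) ∧
    (∀ n, r.lp j h ≤ n → n ≤ r.fp j h → (r.conf (r.lp j h)).2 <:+ (r.conf n).2) := by
  obtain ⟨hij, hjk, hkm, hsik, -⟩ := hlev
  have hlp : ∃ y ≤ j, r.s y = h := by
    obtain ⟨y, ⟨-, hyj⟩, hy⟩ :=
      r.exists_s_eq hnf hij.le (by omega) (Set.mem_uIcc_of_le (by omega) hhu)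
    exact ⟨y, hyj, hy⟩
  have hfp : ∃ y ∈ Set.Icc j m, r.s y = h := by
    obtain ⟨y, ⟨hjy, hyk⟩, hy⟩ :=
      r.exists_s_eq hnf hjk.le hkm (Set.mem_uIcc_of_ge (by omega) hhu)
    exact ⟨y, ⟨hjy, hyk.trans hkm⟩, hy⟩
  exact ⟨r.le_s_of_lp_le_of_le_fp hnf hlp hfp hhu, r.lt_s_of_lp_lt_of_lt_fp hnf hlp hfp hhu,
    r.conf_lp_suffix hnf hlp hfp hhu⟩

/-- Between `lp(h)` and `fp(h)` the run never pops the stack below height `h`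
(strictly above `h` in between), so the stack contents at `lp(h)` remain a suffix
of the stack throughout; the behaviour on the infix `x` depends only on the state
and top stack symbol at `lp(h)`. -/
theorem middle_segment_above_h {Q A Γ : Type} {M : PDA Q A Γ} {m : ℕ}
    (hnf : M.NormalForm) (r : M.Run m)
    {N i j k : ℕ} (hlev : r.IsLevel N i j k)
    {g h : ℕ} (hgl : r.s i ≤ g) (hgh : g < h) (hhu : h ≤ r.s j)
    (hfs : r.fullState j g = r.fullState j h) :
    (∀ n, r.lp j h ≤ n → n ≤ r.fp j h → h ≤ r.s n) ∧
    (∀ n, r.lp j h < n → n < r.fp j h → h < r.s n) ∧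
    (∀ n, r.lp j h ≤ n → n ≤ r.fp j h → (r.conf (r.lp j h)).2 <:+ (r.conf n).2) :=
  middle_segment_above_h_general hnf r hlev hgl hgh hhu
end
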